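/- Let X = (X₁,...,X_m) be a non-degenerate wide-sense multi-self-similar ℝ^m-valued random field on T = [0,∞)^d with scaling functions f = (f₁,...,f_m) and shift functions g = (g₁,...,g_m). Then there exist nonnegative reals H_i^{(j)} with f_j(a) = ∏_{i=1}^d a_i^{H_i^{(j)}} for all a ∈ (0,∞)^d, and for every j such that the vector H^{(j)} = (H₁^{(j)},...,H_d^{(j)}) is not identically zero, there is a constant D_j ∈ ℝ such that g_j(a) = D_j(1 − f_j(a)) for all a ∈ (0,∞)^d and X_j(0) = D_j almost surely. -/

import Mathlib

/-!
A non-degenerate law `μ` on `ℝ` charges both `(-∞, c)` and `(c', ∞)` for some `c < c'`, so the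
affine images `x ↦ α x + β` of `μ` that stay tight have bounded slopes `α`. Hence no affine map
of slope `> 1` fixes `μ` (its iterates would fix it too), and `μ` determines the slope of an
affine map transporting it to a given law; comparing the laws of `X_j(a·b)` and `X_j(b)` makes
`f_j` multiplicative. Stochastic continuity keeps the laws of `X_j(a)` tight as `a` tends to a
point of `[0,∞)^d`, so `f_j` cannot blow up there: near `1` this makes `u ↦ log f_j(exp u)` a
locally bounded additive map, hence linear, and near the boundary it forces the exponents to be
nonnegative. Finally the law of `X_j(0)` is fixed by every `x ↦ f_j(a) x + g_j(a)`; when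
`H^{(j)} ≠ 0` one of these has slope `> 1`, so that law is a Dirac mass at some `D`, which all
these maps must fix: `g_j(a) = D (1 - f_j(a))`.
-/

open MeasureTheory Filter Topology Set
open scoped ENNReal

section AffineImage

variable {μ : Measure ℝ}

lemma exists_lt_measure_Iio_pos_measure_Ioi_pos (hμ : ∀ c, ¬ ∀ᵐ x ∂μ, x = c) :
    ∃ c c', c < c' ∧ 0 < μ (Iio c) ∧ 0 < μ (Ioi c') := by
  obtain ⟨x, hx⟩ := Measure.nonempty_support (μ := μ) (by rintro rfl; exact hμ 0 (by simp))
  obtain ⟨y, hy, hyx⟩ : ∃ y ∈ μ.support, y ≠ x := by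
    by_contra! h
    exact hμ x (mem_of_superset Measure.support_mem_ae h)
  wlog hxy : x < y generalizing x y
  · exact this y hy x hx hyx.symm (lt_of_le_of_ne (not_lt.1 hxy) hyx)
  exact ⟨(2 * x + y) / 3, (x + 2 * y) / 3, by linarith,
    (Measure.mem_support_iff_forall x).1 hx _ (Iio_mem_nhds (by linarith)),
    (Measure.mem_support_iff_forall y).1 hy _ (Ioi_mem_nhds (by linarith))⟩

lemma measurableSet_abs_gt (M : ℝ) : MeasurableSet {x : ℝ | M < |x|} :=
  measurableSet_lt measurable_const measurable_abs

lemma exists_slope_bound_of_map_affine (hμ : ∀ c, ¬ ∀ᵐ x ∂μ, x = c) :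
    ∃ r > 0, ∀ M : ℝ, ∃ C, ∀ α β : ℝ, 0 < α →
      μ.map (fun x => α * x + β) {x | M < |x|} < r → α ≤ C := by
  obtain ⟨c, c', hcc', hc, hc'⟩ := exists_lt_measure_Iio_pos_measure_Ioi_pos hμ
  refine ⟨min (μ (Iio c)) (μ (Ioi c')), lt_min hc hc', fun M =>
    ⟨2 * M / (c' - c), fun α β hα h => ?_⟩⟩
  rw [Measure.map_apply (by fun_prop) (measurableSet_abs_gt M)] at h
  -- `μ` charges `Iio c` and `Ioi c'`, so neither image point `α c + β`, `α c' + β` can leave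
  -- `[-M, M]`.
  have hlow : -M < α * c + β := by
    by_contra! hle
    refine (h.trans_le (min_le_left _ _)).not_ge (measure_mono fun x (hx : x < c) => ?_)
    show M < |α * x + β|
    have := mul_lt_mul_of_pos_left hx hα
    exact lt_abs.2 (Or.inr (by linarith))
  have hhigh : α * c' + β < M := by
    by_contra! hle
    refine (h.trans_le (min_le_right _ _)).not_ge (measure_mono fun x (hx : c' < x) => ?_)
    show M < |α * x + β|
    have := mul_lt_mul_of_pos_left hx hα
    exact lt_abs.2 (Or.inl (by linarith))
  exact (le_div_iff₀ (sub_pos.2 hcc')).2 (by nlinarith)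

lemma exists_measure_abs_gt_lt (μ : Measure ℝ) [IsFiniteMeasure μ] {r : ℝ≥0∞} (hr : 0 < r) :
    ∃ M, μ {x | M < |x|} < r := by
  have h := tendsto_measure_norm_gt_of_isTightMeasureSet (isTightMeasureSet_singleton (μ := μ))
  simp only [mem_singleton_iff, iSup_iSup_eq_left, Real.norm_eq_abs] at h
  exact (h.eventually (gt_mem_nhds hr)).exists

lemma exists_map_affine_pow_eq_self {l c : ℝ} (h : μ.map (fun x => l * x + c) = μ) (n : ℕ) :
    ∃ β, μ.map (fun x => l ^ n * x + β) = μ := by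
  induction n with
  | zero => exact ⟨0, by simp⟩
  | succ n ih =>
    obtain ⟨β, hβ⟩ := ih
    refine ⟨l * β + c, ?_⟩
    calc μ.map (fun x => l ^ (n + 1) * x + (l * β + c))
        = (μ.map fun x => l ^ n * x + β).map fun x => l * x + c := by
          rw [Measure.map_map (by fun_prop) (by fun_prop)]
          congr 1
          funext x
          simp only [Function.comp_apply, pow_succ]
          ring
      _ = μ := by rw [hβ, h]

lemma map_affine_ne_self_of_one_lt [IsFiniteMeasure μ] (hμ : ∀ c, ¬ ∀ᵐ x ∂μ, x = c)
    {l : ℝ} (hl : 1 < l) (c : ℝ) : μ.map (fun x => l * x + c) ≠ μ := by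
  intro h
  obtain ⟨r, hr, hbound⟩ := exists_slope_bound_of_map_affine hμ
  obtain ⟨M, hM⟩ := exists_measure_abs_gt_lt μ hr
  obtain ⟨C, hC⟩ := hbound M
  obtain ⟨n, hn⟩ := pow_unbounded_of_one_lt C hl
  obtain ⟨β, hβ⟩ := exists_map_affine_pow_eq_self h n
  exact hn.not_ge (hC _ β (by positivity) (by rwa [hβ]))

lemma slope_eq_of_map_affine_eq [IsFiniteMeasure μ] (hμ : ∀ c, ¬ ∀ᵐ x ∂μ, x = c)
    {α β α' β' : ℝ} (hα : 0 < α) (hα' : 0 < α')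
    (h : μ.map (fun x => α * x + β) = μ.map (fun x => α' * x + β')) : α = α' := by
  wlog hle : α ≤ α' generalizing α β α' β'
  · exact (this hα' hα h.symm (le_of_not_ge hle)).symm
  refine hle.eq_of_not_lt fun hlt => map_affine_ne_self_of_one_lt hμ
    ((one_lt_div hα).2 hlt) ((β' - β) / α) ?_
  have hcomp (a b : ℝ) : ((fun y => (y - β) / α) ∘ fun x => a * x + b) =
      fun x => a / α * x + (b - β) / α := by
    funext x
    simp only [Function.comp_apply]
    ring
  have := congrArg (Measure.map fun y => (y - β) / α) h
  rw [Measure.map_map (by fun_prop) (by fun_prop),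
    Measure.map_map (by fun_prop) (by fun_prop)] at this
  simpa [hcomp, hα.ne', eq_comm] using this

end AffineImage

lemma exists_eventually_le_of_not_tendsto_atTop {E : Type*} [PseudoMetricSpace E] {f : E → ℝ}
    {x : E} (h : ∀ u : ℕ → E, Tendsto u atTop (𝓝 x) → ¬ Tendsto (f ∘ u) atTop atTop) :
    ∃ C, ∀ᶠ y in 𝓝 x, f y ≤ C := by
  by_contra! hC
  have hseq (n : ℕ) : ∃ y, dist y x < 1 / (n + 1) ∧ (n : ℝ) < f y := by
    have hball : Metric.ball x (1 / (n + 1)) ∈ 𝓝 x := Metric.ball_mem_nhds x (by positivity)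
    obtain ⟨y, hy, hyx⟩ := ((hC n).and_eventually hball).exists
    exact ⟨y, hyx, hy⟩
  choose u hux hu using hseq
  refine h u ?_ (tendsto_atTop_mono (fun n => (hu n).le) tendsto_natCast_atTop_atTop)
  exact tendsto_iff_dist_tendsto_zero.2 (squeeze_zero (fun _ => dist_nonneg) (fun n => (hux n).le)
    tendsto_one_div_add_atTop_nhds_zero_nat)

lemma AddMonoidHom.continuous_of_eventually_le {G : Type*} [SeminormedAddCommGroup G]
    (Φ : G →+ ℝ) {C : ℝ} (h : ∀ᶠ u in 𝓝 0, Φ u ≤ C) : Continuous Φ := by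
  have hneg : ∀ᶠ u in 𝓝 (0 : G), Φ (-u) ≤ C :=
    (continuous_neg.tendsto' (0 : G) 0 neg_zero).eventually h
  refine Φ.continuous_of_isBounded_nhds_zero (h.and hneg)
    (Metric.isBounded_iff_subset_closedBall 0 |>.2 ⟨C, ?_⟩)
  rintro _ ⟨u, ⟨hu, hnu⟩, rfl⟩
  rw [map_neg] at hnu
  rw [Metric.mem_closedBall, dist_zero_right, Real.norm_eq_abs, abs_le]
  exact ⟨by linarith, hu⟩

lemma prod_mulSingle_rpow {ι : Type*} [Fintype ι] [DecidableEq ι] (H : ι → ℝ) (i : ι) (x : ℝ) :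
    ∏ k, Pi.mulSingle i x k ^ H k = x ^ H i := by
  rw [Fintype.prod_eq_single i fun k hk => by simp [Pi.mulSingle_eq_of_ne hk]]
  simp

/-- The multiplicative Cauchy equation on `(0, ∞)^ι`, under sequential local boundedness at `1`. -/
lemma exists_eq_prod_rpow_of_mul {ι : Type*} [Fintype ι] {φ : (ι → ℝ) → ℝ}
    (hpos : ∀ a : ι → ℝ, (∀ i, 0 < a i) → 0 < φ a)
    (hmul : ∀ a b : ι → ℝ, (∀ i, 0 < a i) → (∀ i, 0 < b i) → φ (a * b) = φ a * φ b)
    (hbdd : ∀ a : ℕ → ι → ℝ, (∀ n i, 0 < a n i) → Tendsto a atTop (𝓝 1) →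
      ¬ Tendsto (fun n => φ (a n)) atTop atTop) :
    ∃ H : ι → ℝ, ∀ a : ι → ℝ, (∀ i, 0 < a i) → φ a = ∏ i, a i ^ H i := by
  classical
  have hexp (u : ι → ℝ) : ∀ i, 0 < Real.exp (u i) := fun i => Real.exp_pos _
  let Φ : (ι → ℝ) →+ ℝ := AddMonoidHom.mk' (fun u => Real.log (φ fun i => Real.exp (u i)))
    fun u v => by
      simp only [Pi.add_apply, Real.exp_add]
      rw [← Real.log_mul (hpos _ (hexp u)).ne' (hpos _ (hexp v)).ne', ← hmul _ _ (hexp u) (hexp v)]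
      rfl
  have hΦ (u : ι → ℝ) : φ (fun i => Real.exp (u i)) = Real.exp (Φ u) :=
    (Real.exp_log (hpos _ (hexp u))).symm
  obtain ⟨C, hC⟩ : ∃ C, ∀ᶠ u in 𝓝 0, Φ u ≤ C := by
    refine exists_eventually_le_of_not_tendsto_atTop fun u hu htop => hbdd _ (fun n => hexp (u n))
      ?_ ?_
    · simpa [Function.comp_def, Pi.one_def] using
        (continuous_pi fun i => Real.continuous_exp.comp (continuous_apply i)).tendsto 0 |>.comp hu
    · simpa only [hΦ, Function.comp_def] using Real.tendsto_exp_atTop.comp htop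
  have hcont := Φ.continuous_of_eventually_le hC
  refine ⟨fun i => Φ (Pi.single i 1), fun a ha => ?_⟩
  have hlin : Φ (fun i => Real.log (a i)) = ∑ i, Real.log (a i) * Φ (Pi.single i 1) := by
    conv_lhs => rw [← Finset.univ_sum_single fun i => Real.log (a i)]
    rw [map_sum]
    refine Finset.sum_congr rfl fun i _ => ?_
    rw [← smul_eq_mul, ← map_real_smul Φ hcont, ← Pi.single_smul', smul_eq_mul, mul_one]
  calc φ a = φ fun i => Real.exp (Real.log (a i)) := by simp only [Real.exp_log (ha _)]
    _ = ∏ i, a i ^ Φ (Pi.single i 1) := by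
      rw [hΦ, hlin, Real.exp_sum]
      exact Finset.prod_congr rfl fun i _ => (Real.rpow_def_of_pos (ha i) _).symm

lemma MeasureTheory.TendstoInMeasure.exists_eventually_measure_abs_gt_lt {Ω : Type*}
    [MeasurableSpace Ω] {P : Measure Ω} [IsFiniteMeasure P] {W : ℕ → Ω → ℝ} {W' : Ω → ℝ}
    (h : TendstoInMeasure P W atTop W') (hW' : Measurable W') {r : ℝ≥0∞} (hr : 0 < r) :
    ∃ M, ∀ᶠ n in atTop, P {ω | M < |W n ω|} < r := by
  obtain ⟨M, hM⟩ := exists_measure_abs_gt_lt (P.map W') (ENNReal.half_pos hr.ne')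
  rw [Measure.map_apply hW' (measurableSet_abs_gt M)] at hM
  refine ⟨M + 1, ?_⟩
  filter_upwards [(tendstoInMeasure_iff_dist.1 h 1 one_pos).eventually
    (gt_mem_nhds (ENNReal.half_pos hr.ne'))] with n hn
  calc P {ω | M + 1 < |W n ω|}
      ≤ P ({ω | M < |W' ω|} ∪ {ω | 1 ≤ dist (W n ω) (W' ω)}) := by
        refine measure_mono fun ω (hω : M + 1 < |W n ω|) => ?_
        by_contra! hout
        simp only [mem_union, mem_ofPred_eq, not_or, not_lt, Real.dist_eq] at hout
        linarith [abs_sub_abs_le_abs_sub (W n ω) (W' ω)]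
    _ ≤ P {ω | M < |W' ω|} + P {ω | 1 ≤ dist (W n ω) (W' ω)} := measure_union_le _ _
    _ < r / 2 + r / 2 := ENNReal.add_lt_add hM hn
    _ = r := ENNReal.add_halves r

lemma MeasureTheory.TendstoInMeasure.apply {Ω ι κ : Type*} [MeasurableSpace Ω] [Fintype ι]
    {E : ι → Type*} [∀ j, PseudoEMetricSpace (E j)] {P : Measure Ω} {l : Filter κ}
    {W : κ → Ω → ∀ j, E j} {W' : Ω → ∀ j, E j} (h : TendstoInMeasure P W l W') (j : ι) :
    TendstoInMeasure P (fun n ω => W n ω j) l (fun ω => W' ω j) := fun ε hε =>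
  tendsto_of_tendsto_of_tendsto_of_le_of_le tendsto_const_nhds (h ε hε) (fun _ => zero_le)
    fun _ => measure_mono fun _ hω => le_trans hω (edist_le_pi_edist _ _ j)

lemma mulSingle_pos {ι : Type*} [DecidableEq ι] (i : ι) {x : ℝ} (hx : 0 < x) (k : ι) :
    0 < (Pi.mulSingle i x : ι → ℝ) k := by
  rw [Pi.mulSingle_apply]
  split_ifs
  exacts [hx, one_pos]

lemma mulSingle_nonneg {ι : Type*} [DecidableEq ι] (i : ι) {x : ℝ} (hx : 0 ≤ x) (k : ι) :
    0 ≤ (Pi.mulSingle i x : ι → ℝ) k := by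
  rw [Pi.mulSingle_apply]
  split_ifs
  exacts [hx, zero_le_one]

section RandomField

variable {d : ℕ} {Ω : Type*} [MeasurableSpace Ω]

/-- A coordinate of a wide-sense multi-self-similar field, with its scaling and shift functions
`φ = f_j`, `ψ = g_j`. -/
structure IsWideSenseSelfSimilar (P : Measure Ω) (Y : (Fin d → ℝ) → Ω → ℝ)
    (φ ψ : (Fin d → ℝ) → ℝ) : Prop where
  measurable : ∀ t, Measurable (Y t)
  tendstoInMeasure : ∀ t : Fin d → ℝ, (∀ i, 0 ≤ t i) → ∀ u : ℕ → Fin d → ℝ,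
    (∀ n i, 0 ≤ u n i) → Tendsto u atTop (𝓝 t) → TendstoInMeasure P (fun n => Y (u n)) atTop (Y t)
  scale_pos : ∀ a : Fin d → ℝ, (∀ i, 0 < a i) → 0 < φ a
  map_eq : ∀ a : Fin d → ℝ, (∀ i, 0 < a i) → ∀ t : Fin d → ℝ, (∀ i, 0 ≤ t i) →
    P.map (Y (a * t)) = (P.map (Y t)).map fun x => φ a * x + ψ a

namespace IsWideSenseSelfSimilar

variable {P : Measure Ω} {Y : (Fin d → ℝ) → Ω → ℝ} {φ ψ : (Fin d → ℝ) → ℝ}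

lemma map_eq_one (hY : IsWideSenseSelfSimilar P Y φ ψ) {a : Fin d → ℝ} (ha : ∀ i, 0 < a i) :
    P.map (Y a) = (P.map (Y 1)).map fun x => φ a * x + ψ a := by
  simpa using hY.map_eq a ha 1 fun _ => zero_le_one

variable [IsProbabilityMeasure P]

lemma scale_mul (hY : IsWideSenseSelfSimilar P Y φ ψ)
    (hnd : ∀ c, ¬ ∀ᵐ x ∂P.map (Y 1), x = c) {a b : Fin d → ℝ} (ha : ∀ i, 0 < a i)
    (hb : ∀ i, 0 < b i) : φ (a * b) = φ a * φ b := by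
  have hab : ∀ i, 0 < (a * b) i := fun i => mul_pos (ha i) (hb i)
  have := Measure.isProbabilityMeasure_map (μ := P) (hY.measurable 1).aemeasurable
  refine slope_eq_of_map_affine_eq hnd (β := ψ (a * b)) (β' := φ a * ψ b + ψ a)
    (hY.scale_pos _ hab) (mul_pos (hY.scale_pos a ha) (hY.scale_pos b hb)) ?_
  rw [← hY.map_eq_one hab, hY.map_eq a ha b fun i => (hb i).le, hY.map_eq_one hb,
    Measure.map_map (by fun_prop) (by fun_prop)]
  congr 1
  funext x
  simp only [Function.comp_apply]
  ring

lemma not_tendsto_scale_atTop (hY : IsWideSenseSelfSimilar P Y φ ψ)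
    (hnd : ∀ c, ¬ ∀ᵐ x ∂P.map (Y 1), x = c) {a : ℕ → Fin d → ℝ} (ha : ∀ n i, 0 < a n i)
    {t : Fin d → ℝ} (ht : ∀ i, 0 ≤ t i) (hat : Tendsto a atTop (𝓝 t)) :
    ¬ Tendsto (fun n => φ (a n)) atTop atTop := by
  obtain ⟨r, hr, hbound⟩ := exists_slope_bound_of_map_affine hnd
  obtain ⟨M, hM⟩ := TendstoInMeasure.exists_eventually_measure_abs_gt_lt
    (hY.tendstoInMeasure t ht a (fun n i => (ha n i).le) hat) (hY.measurable t) hr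
  obtain ⟨C, hC⟩ := hbound M
  intro htop
  obtain ⟨n, hn, hφ⟩ := (hM.and (htop.eventually_gt_atTop C)).exists
  refine hφ.not_ge (hC _ (ψ (a n)) (hY.scale_pos _ (ha n)) ?_)
  rwa [← hY.map_eq_one (ha n), Measure.map_apply (hY.measurable _) (measurableSet_abs_gt M)]

lemma exponent_nonneg (hY : IsWideSenseSelfSimilar P Y φ ψ)
    (hnd : ∀ c, ¬ ∀ᵐ x ∂P.map (Y 1), x = c) {H : Fin d → ℝ}
    (hH : ∀ a : Fin d → ℝ, (∀ i, 0 < a i) → φ a = ∏ i, a i ^ H i) (i : Fin d) : 0 ≤ H i := by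
  by_contra! hneg
  have hx : Tendsto (fun n : ℕ => Real.exp (-n)) atTop (𝓝 0) :=
    Real.tendsto_exp_neg_atTop_nhds_zero.comp tendsto_natCast_atTop_atTop
  have hapos (n : ℕ) := mulSingle_pos i (Real.exp_pos (-n))
  refine hY.not_tendsto_scale_atTop hnd hapos (mulSingle_nonneg i le_rfl)
    ((continuous_mulSingle i).tendsto 0 |>.comp hx) ?_
  have hφ (n : ℕ) : φ (Pi.mulSingle i (Real.exp (-n))) = Real.exp (n * -H i) := by
    rw [hH _ (hapos n), prod_mulSingle_rpow, ← Real.exp_mul]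
    ring_nf
  simpa only [hφ, Function.comp_def] using Real.tendsto_exp_atTop.comp
      (tendsto_natCast_atTop_atTop.atTop_mul_const (neg_pos.2 hneg))

lemma exists_ae_eq_of_one_lt_scale (hY : IsWideSenseSelfSimilar P Y φ ψ) {a₀ : Fin d → ℝ}
    (ha₀ : ∀ i, 0 < a₀ i) (h1 : 1 < φ a₀) :
    ∃ D : ℝ, (∀ a : Fin d → ℝ, (∀ i, 0 < a i) → ψ a = D * (1 - φ a)) ∧ ∀ᵐ ω ∂P, Y 0 ω = D := by
  have := Measure.isProbabilityMeasure_map (μ := P) (hY.measurable 0).aemeasurable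
  have hinv (a : Fin d → ℝ) (ha : ∀ i, 0 < a i) :
      (P.map (Y 0)).map (fun x => φ a * x + ψ a) = P.map (Y 0) := by
    simpa using (hY.map_eq a ha 0 fun _ => le_rfl).symm
  obtain ⟨D, hD⟩ : ∃ D, ∀ᵐ x ∂P.map (Y 0), x = D := by
    by_contra hdeg
    exact map_affine_ne_self_of_one_lt (fun c hc => hdeg ⟨c, hc⟩) h1 _ (hinv a₀ ha₀)
  refine ⟨D, fun a ha => ?_,
    (ae_map_iff (hY.measurable 0).aemeasurable (p := (· = D)) (measurableSet_singleton D)).1 hD⟩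
  have hfix := hD
  rw [← hinv a ha, ae_map_iff (by fun_prop) (p := (· = D)) (measurableSet_singleton D)] at hfix
  obtain ⟨x, hx, rfl⟩ := (hfix.and hD).exists
  linarith

theorem exists_exponents (hY : IsWideSenseSelfSimilar P Y φ ψ)
    (hnd : ∀ c, ¬ ∀ᵐ x ∂P.map (Y 1), x = c) :
    ∃ H : Fin d → ℝ, (∀ i, 0 ≤ H i) ∧
      (∀ a : Fin d → ℝ, (∀ i, 0 < a i) → φ a = ∏ i, a i ^ H i) ∧
      (H ≠ 0 → ∃ D : ℝ, (∀ a : Fin d → ℝ, (∀ i, 0 < a i) → ψ a = D * (1 - φ a)) ∧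
        ∀ᵐ ω ∂P, Y 0 ω = D) := by
  obtain ⟨H, hH⟩ := exists_eq_prod_rpow_of_mul hY.scale_pos
    (fun a b ha hb => hY.scale_mul hnd ha hb)
    fun a ha hlim => hY.not_tendsto_scale_atTop hnd ha (fun _ => zero_le_one) hlim
  have hH0 := hY.exponent_nonneg hnd hH
  refine ⟨H, hH0, hH, fun hne => ?_⟩
  obtain ⟨i, hi⟩ := Function.ne_iff.1 hne
  have htwo := mulSingle_pos (ι := Fin d) i two_pos
  refine hY.exists_ae_eq_of_one_lt_scale htwo ?_
  rw [hH _ htwo, prod_mulSingle_rpow]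
  exact Real.one_lt_rpow one_lt_two (lt_of_le_of_ne (hH0 i) (Ne.symm hi))

end IsWideSenseSelfSimilar

end RandomField

/-- Let `X = (X₁,...,X_m)` be a non-degenerate wide-sense
multi-self-similar `ℝ^m`-valued random field on `T = [0,∞)^d` with scaling
functions `f = (f₁,...,f_m)` and shift functions `g = (g₁,...,g_m)`. Then there
exist nonnegative reals `H_i^{(j)}` with `f_j(a) = ∏_i a_i^{H_i^{(j)}}`, and for
every `j` whose exponent vector `H^{(j)}` is not identically zero there is a
constant `D_j ∈ ℝ` with `g_j(a) = D_j(1 − f_j(a))` for all `a ∈ (0,∞)^d` and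
`X_j(0) = D_j` almost surely. -/
theorem stmt_10 {d m : ℕ} {Ω : Type*} [MeasurableSpace Ω]
    (P : Measure Ω) [IsProbabilityMeasure P]
    (X : (Fin d → ℝ) → Ω → (Fin m → ℝ))
    (hXmeas : ∀ t, Measurable (X t))
    -- stochastic continuity on `[0,∞)^d`
    (hXcont : ∀ t : Fin d → ℝ, (∀ i, 0 ≤ t i) →
      ∀ u : ℕ → Fin d → ℝ, (∀ n i, 0 ≤ u n i) → Tendsto u atTop (𝓝 t) →
        TendstoInMeasure P (fun n => X (u n)) atTop (X t))
    (f : (Fin d → ℝ) → Fin m → ℝ) (g : (Fin d → ℝ) → Fin m → ℝ)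
    (hfpos : ∀ a : Fin d → ℝ, (∀ i, 0 < a i) → ∀ j, 0 < f a j)
    -- wide-sense multi-self-similarity
    (hss : ∀ a : Fin d → ℝ, (∀ i, 0 < a i) →
      ∀ (k : ℕ) (t : Fin k → Fin d → ℝ), (∀ i i', 0 ≤ t i i') →
        Measure.map (fun ω => fun i => X (a * t i) ω) P
          = Measure.map (fun ω => fun i => fun j => f a j * X (t i) ω j + g a j) P)
    -- non-degeneracy: `X_j(1,...,1)` is not a.s. constant
    (hnd : ∀ j, ¬ ∃ c : ℝ, ∀ᵐ ω ∂P, X (fun _ => 1) ω j = c) :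
    ∃ H : Fin m → Fin d → ℝ, (∀ j i, 0 ≤ H j i) ∧
      (∀ a : Fin d → ℝ, (∀ i, 0 < a i) → ∀ j, f a j = ∏ i, a i ^ H j i) ∧
      (∀ j, H j ≠ 0 → ∃ D : ℝ,
        (∀ a : Fin d → ℝ, (∀ i, 0 < a i) → g a j = D * (1 - f a j)) ∧
        (∀ᵐ ω ∂P, X 0 ω j = D)) := by
  have hmeas (t : Fin d → ℝ) (j : Fin m) : Measurable fun ω => X t ω j :=
    (measurable_pi_apply j).comp (hXmeas t)
  have hY (j : Fin m) : IsWideSenseSelfSimilar P (fun t ω => X t ω j) (f · j) (g · j) :=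
    { measurable := fun t => hmeas t j
      tendstoInMeasure := fun t ht u hu hut => (hXcont t ht u hu hut).apply j
      scale_pos := fun a ha => hfpos a ha j
      map_eq := fun a ha t ht => by
        have h := congrArg (Measure.map fun v : Fin 1 → Fin m → ℝ => v 0 j)
          (hss a ha 1 (fun _ => t) fun _ => ht)
        rw [Measure.map_map (by fun_prop) (measurable_pi_lambda _ fun _ => hXmeas _),
          Measure.map_map (by fun_prop) (by fun_prop)] at h
        rwa [Measure.map_map (by fun_prop) (hmeas t j)] }
  have hnd' (j : Fin m) (c : ℝ) : ¬ ∀ᵐ x ∂P.map (fun ω => X 1 ω j), x = c := fun h =>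
    hnd j ⟨c, (ae_map_iff (hmeas 1 j).aemeasurable (p := (· = c)) (measurableSet_singleton c)).1 h⟩
  choose H hH0 hHf hHD using fun j => (hY j).exists_exponents (hnd' j)
  exact ⟨H, hH0, fun a ha j => hHf j a ha, hHD⟩
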